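/- arXiv:2307.00490 — 8 statements merged into one kernel-verified Lean document; each statement's English description precedes it below -/
import Mathlib

section
/- In the Steihaug–Toint truncated conjugate gradient method applied to the quadratic model m(ξ) = φ(x) + ⟨g, ξ⟩ + (1/2)⟨Hξ, ξ⟩ on an inner product space, starting from ξ₀ = 0: the model values are monotonically nonincreasing along the iterates (m(ξ₀) ≥ m(ξ₁) ≥ … ≥ m(η_k)) and the norms of the iterates are monotonically nondecreasing (‖ξ₀‖ ≤ ‖ξ₁‖ ≤ … ≤ ‖ξ_j‖ ≤ ‖η_k‖ ≤ ‖H⁻¹(−g)‖ when H is positive definite). -/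
/-!
The residuals `r j = g + H (ξ j)` of conjugate gradients are mutually orthogonal and the
directions `δ j` are `H`-conjugate. Consequently `⟪ξ j, δ j⟫ ≥ 0`, so `‖ξ j + t • δ j‖` grows
with `t ≥ 0`, while the model decreases for `0 ≤ t ≤ α j` since `α j` minimizes it along `δ j`.
In infinite dimensions CG need not reach the minimizer `H⁻¹(-g)` in finitely many steps;
instead, each step lowers the model by at least `‖r j‖² / (2‖H‖)` and the model is bounded
below by its minimum, so `r j → 0` and `ξ j → H⁻¹(-g)`, and the nondecreasing norms `‖ξ j‖`
stay below `‖H⁻¹(-g)‖`.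
-/

open scoped RealInnerProductSpace
open Filter Topology

section

variable {V : Type*} [NormedAddCommGroup V] [InnerProductSpace ℝ V]

noncomputable def quadModel (φx : ℝ) (g : V) (H : V →L[ℝ] V) (ξ : V) : ℝ :=
  φx + ⟪g, ξ⟫ + (1/2) * ⟪H ξ, ξ⟫

variable {H : V →L[ℝ] V}

theorem quadModel_add_smul (hsym : ∀ u v : V, ⟪H u, v⟫ = ⟪u, H v⟫) (φx : ℝ) (g x d : V)
    (t : ℝ) : quadModel φx g H (x + t • d)
      = quadModel φx g H x + t * ⟪g + H x, d⟫ + t ^ 2 / 2 * ⟪d, H d⟫ := by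
  have hx : ⟪H d, x⟫ = ⟪H x, d⟫ := by rw [hsym, real_inner_comm]
  have hd : ⟪H d, d⟫ = ⟪d, H d⟫ := hsym d d
  simp only [quadModel, map_add, map_smul, inner_add_left, inner_add_right,
    real_inner_smul_left, real_inner_smul_right, hx, hd]
  ring

theorem quadModel_add_smul_le (hsym : ∀ u v : V, ⟪H u, v⟫ = ⟪u, H v⟫) (φx : ℝ) (g x d : V)
    {t : ℝ} (ht : 0 ≤ t) (hdesc : t * ⟪d, H d⟫ ≤ -2 * ⟪g + H x, d⟫) :
    quadModel φx g H (x + t • d) ≤ quadModel φx g H x := by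
  rw [quadModel_add_smul hsym]
  nlinarith [mul_le_mul_of_nonneg_left hdesc ht]

theorem quadModel_le_of_map_eq_neg (hsym : ∀ u v : V, ⟪H u, v⟫ = ⟪u, H v⟫)
    (hnonneg : ∀ v, 0 ≤ ⟪v, H v⟫) (φx : ℝ) {g x : V} (hx : H x = -g) (y : V) :
    quadModel φx g H x ≤ quadModel φx g H y := by
  have := quadModel_add_smul hsym φx g x (y - x) 1
  rw [one_smul, add_sub_cancel, hx, add_neg_cancel, inner_zero_left] at this
  linarith [hnonneg (y - x)]

theorem monotoneOn_norm_add_smul {x d : V} (h : 0 ≤ ⟪x, d⟫) :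
    MonotoneOn (fun t : ℝ => ‖x + t • d‖) (Set.Ici 0) := by
  intro s hs t ht hst
  have hsq : ∀ u : ℝ, ‖x + u • d‖ ^ 2 = ‖x‖ ^ 2 + 2 * (u * ⟪x, d⟫) + u ^ 2 * ‖d‖ ^ 2 := by
    intro u
    rw [norm_add_sq_real, real_inner_smul_right, norm_smul, Real.norm_eq_abs, mul_pow, sq_abs]
  refine (pow_le_pow_iff_left₀ (norm_nonneg _) (norm_nonneg _) two_ne_zero).mp ?_
  rw [hsq, hsq]
  have hs : (0 : ℝ) ≤ s := hs
  nlinarith [mul_le_mul_of_nonneg_right hst h, sq_nonneg ‖d‖, mul_self_le_mul_self hs hst]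

theorem tendsto_zero_of_le_sub_succ {u f : ℕ → ℝ} {c : ℝ} (hu : ∀ n, 0 ≤ u n)
    (hf : ∀ n, u n ≤ f n - f (n + 1)) (hc : ∀ n, c ≤ f n) : Tendsto u atTop (𝓝 0) := by
  refine (summable_of_sum_range_le hu (c := f 0 - c) fun n => ?_).tendsto_atTop_zero
  calc ∑ i ∈ Finset.range n, u i ≤ ∑ i ∈ Finset.range n, (f i - f (i + 1)) :=
        Finset.sum_le_sum fun i _ => hf i
    _ = f 0 - f n := Finset.sum_range_sub' f n
    _ ≤ f 0 - c := by linarith [hc n]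

theorem inner_map_self_nonneg_of_pos (hH : ∀ v : V, v ≠ 0 → 0 < ⟪v, H v⟫)
    (v : V) : 0 ≤ ⟪v, H v⟫ := by
  rcases eq_or_ne v 0 with rfl | hv
  · simp
  · exact (hH v hv).le

-- With `x / 0 = 0` the iteration stalls once `r j = 0` (all later `α`, `β`, `δ`, `r` vanish),
-- so none of the invariants below needs a nondegeneracy hypothesis.
structure IsCGSequence (H : V →L[ℝ] V) (g : V) (ξ r δ : ℕ → V) (α β : ℕ → ℝ) : Prop where
  ξ_zero : ξ 0 = 0
  r_zero : r 0 = g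
  δ_zero : δ 0 = -g
  α_eq : ∀ j, α j = ⟪r j, r j⟫ / ⟪δ j, H (δ j)⟫
  ξ_succ : ∀ j, ξ (j + 1) = ξ j + α j • δ j
  r_succ : ∀ j, r (j + 1) = r j + α j • H (δ j)
  β_succ : ∀ j, β (j + 1) = ⟪r (j + 1), r (j + 1)⟫ / ⟪r j, r j⟫
  δ_succ : ∀ j, δ (j + 1) = -r (j + 1) + β (j + 1) • δ j

namespace IsCGSequence

variable {g : V} {ξ r δ : ℕ → V} {α β : ℕ → ℝ}

theorem r_eq (cg : IsCGSequence H g ξ r δ α β) (j : ℕ) : r j = g + H (ξ j) := by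
  induction j with
  | zero => simp [cg.r_zero, cg.ξ_zero]
  | succ j ih => rw [cg.r_succ, cg.ξ_succ, ih, map_add, map_smul, add_assoc]

theorem ξ_eq_sum (cg : IsCGSequence H g ξ r δ α β) (j : ℕ) :
    ξ j = ∑ i ∈ Finset.range j, α i • δ i := by
  induction j with
  | zero => simp [cg.ξ_zero]
  | succ j ih => rw [cg.ξ_succ, ih, Finset.sum_range_succ]

theorem α_smul_map_δ (cg : IsCGSequence H g ξ r δ α β) (j : ℕ) :
    α j • H (δ j) = r (j + 1) - r j := by
  rw [cg.r_succ, add_sub_cancel_left]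

theorem r_succ_eq_zero (cg : IsCGSequence H g ξ r δ α β) {j : ℕ} (hr : r j = 0) :
    r (j + 1) = 0 := by
  simp [cg.r_succ, cg.α_eq, hr]

theorem δ_eq_zero_of_r_eq_zero (cg : IsCGSequence H g ξ r δ α β) {j : ℕ} (hr : r j = 0) :
    δ j = 0 := by
  cases j with
  | zero => rw [cg.δ_zero, ← cg.r_zero, hr, neg_zero]
  | succ j => simp [cg.δ_succ, cg.β_succ, hr]

theorem β_succ_mul (cg : IsCGSequence H g ξ r δ α β) (j : ℕ) :
    β (j + 1) * ⟪r j, r j⟫ = ⟪r (j + 1), r (j + 1)⟫ := by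
  rcases eq_or_ne (r j) 0 with hr | hr
  · simp [cg.r_succ_eq_zero hr, hr]
  · rw [cg.β_succ, div_mul_cancel₀ _ (inner_self_ne_zero.mpr hr)]

theorem α_nonneg (cg : IsCGSequence H g ξ r δ α β)
    (hH : ∀ v : V, v ≠ 0 → 0 < ⟪v, H v⟫) (j : ℕ) : 0 ≤ α j := by
  rw [cg.α_eq]
  exact div_nonneg real_inner_self_nonneg (inner_map_self_nonneg_of_pos hH _)

theorem δ_eq_zero_of_α_eq_zero (cg : IsCGSequence H g ξ r δ α β)
    (hH : ∀ v : V, v ≠ 0 → 0 < ⟪v, H v⟫) {j : ℕ} (hα : α j = 0) :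
    δ j = 0 := by
  rw [cg.α_eq, div_eq_zero_iff, inner_self_eq_zero] at hα
  rcases hα with hr | hcurv
  · exact cg.δ_eq_zero_of_r_eq_zero hr
  · by_contra hδ
    exact (hH _ hδ).ne' hcurv

theorem inner_map_δ_eq_zero (cg : IsCGSequence H g ξ r δ α β)
    (hH : ∀ v : V, v ≠ 0 → 0 < ⟪v, H v⟫) {x : V} {i : ℕ} (h : α i * ⟪x, H (δ i)⟫ = 0) :
    ⟪x, H (δ i)⟫ = 0 := by
  rcases mul_eq_zero.mp h with hα | h
  · rw [cg.δ_eq_zero_of_α_eq_zero hH hα, map_zero, inner_zero_right]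
  · exact h

theorem α_mul_curv (cg : IsCGSequence H g ξ r δ α β)
    (hH : ∀ v : V, v ≠ 0 → 0 < ⟪v, H v⟫) {j : ℕ} (hrδ : ⟪r j, δ j⟫ = -⟪r j, r j⟫) :
    α j * ⟪δ j, H (δ j)⟫ = ⟪r j, r j⟫ := by
  rcases eq_or_ne (δ j) 0 with hδ | hδ
  · rw [hδ, inner_zero_right] at hrδ
    rw [hδ, map_zero, inner_zero_right, mul_zero]
    linarith
  · rw [cg.α_eq, div_mul_cancel₀ _ (hH _ hδ).ne']

theorem inner_r_eq_zero (cg : IsCGSequence H g ξ r δ α β) {x : V} {k : ℕ}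
    (h : ∀ i ≤ k, ⟪x, δ i⟫ = 0) : ⟪x, r k⟫ = 0 := by
  cases k with
  | zero => rw [cg.r_zero, ← neg_neg g, ← cg.δ_zero, inner_neg_right, h 0 le_rfl, neg_zero]
  | succ k =>
    have hr : r (k + 1) = β (k + 1) • δ k - δ (k + 1) := by rw [cg.δ_succ]; abel
    rw [hr, inner_sub_right, real_inner_smul_right, h k (by omega), h (k + 1) le_rfl]
    ring

theorem inner_r_succ_δ (cg : IsCGSequence H g ξ r δ α β)
    (hsym : ∀ u v : V, ⟪H u, v⟫ = ⟪u, H v⟫)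
    (hH : ∀ v : V, v ≠ 0 → 0 < ⟪v, H v⟫) {n : ℕ}
    (hrδ : ⟪r n, δ n⟫ = -⟪r n, r n⟫) (horth : ∀ i < n, ⟪r n, δ i⟫ = 0)
    (hconj : ∀ i < n, ⟪δ n, H (δ i)⟫ = 0) {i : ℕ} (hi : i ≤ n) : ⟪r (n + 1), δ i⟫ = 0 := by
  rw [cg.r_succ, inner_add_left, real_inner_smul_left, hsym]
  rcases hi.lt_or_eq with hi | rfl
  · rw [horth i hi, hconj i hi, mul_zero, add_zero]
  · rw [hrδ, cg.α_mul_curv hH hrδ, neg_add_cancel]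

theorem inner_δ_succ_map_δ (cg : IsCGSequence H g ξ r δ α β)
    (hH : ∀ v : V, v ≠ 0 → 0 < ⟪v, H v⟫) {n : ℕ}
    (hrδ : ⟪r n, δ n⟫ = -⟪r n, r n⟫) (hconj : ∀ i < n, ⟪δ n, H (δ i)⟫ = 0)
    (horth : ∀ i ≤ n, ⟪r (n + 1), δ i⟫ = 0) {i : ℕ} (hi : i ≤ n) :
    ⟪δ (n + 1), H (δ i)⟫ = 0 := by
  refine cg.inner_map_δ_eq_zero hH ?_
  have hr : ⟪r (n + 1), r i⟫ = 0 := cg.inner_r_eq_zero fun k hk => horth k (hk.trans hi)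
  have hα : α i * ⟪r (n + 1), H (δ i)⟫ = ⟪r (n + 1), r (i + 1)⟫ - ⟪r (n + 1), r i⟫ := by
    rw [← real_inner_smul_right, cg.α_smul_map_δ, inner_sub_right]
  rw [cg.δ_succ, inner_add_left, inner_neg_left, real_inner_smul_left, mul_add, mul_neg, hα, hr]
  rcases hi.lt_or_eq with hi | rfl
  · rw [cg.inner_r_eq_zero fun k hk => horth k (by omega), hconj i hi]
    ring
  · rw [mul_left_comm, cg.α_mul_curv hH hrδ, cg.β_succ_mul]
    ring

theorem orthogonality (cg : IsCGSequence H g ξ r δ α β)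
    (hsym : ∀ u v : V, ⟪H u, v⟫ = ⟪u, H v⟫)
    (hH : ∀ v : V, v ≠ 0 → 0 < ⟪v, H v⟫) (n : ℕ) :
    ⟪r n, δ n⟫ = -⟪r n, r n⟫ ∧ (∀ i < n, ⟪r n, δ i⟫ = 0) ∧ ∀ i < n, ⟪δ n, H (δ i)⟫ = 0 := by
  induction n with
  | zero => exact ⟨by rw [cg.δ_zero, ← cg.r_zero, inner_neg_right], by simp, by simp⟩
  | succ n ih =>
    obtain ⟨hrδ, horth, hconj⟩ := ih
    have horth' : ∀ i ≤ n, ⟪r (n + 1), δ i⟫ = 0 :=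
      fun i hi => cg.inner_r_succ_δ hsym hH hrδ horth hconj hi
    refine ⟨?_, fun i hi => horth' i (Nat.lt_succ_iff.mp hi),
      fun i hi => cg.inner_δ_succ_map_δ hH hrδ hconj horth' (Nat.lt_succ_iff.mp hi)⟩
    rw [cg.δ_succ, inner_add_right, inner_neg_right, real_inner_smul_right, horth' n le_rfl,
      mul_zero, add_zero]

theorem inner_r_δ_self (cg : IsCGSequence H g ξ r δ α β)
    (hsym : ∀ u v : V, ⟪H u, v⟫ = ⟪u, H v⟫)
    (hH : ∀ v : V, v ≠ 0 → 0 < ⟪v, H v⟫) (j : ℕ) :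
    ⟪r j, δ j⟫ = -⟪r j, r j⟫ :=
  (cg.orthogonality hsym hH j).1

theorem inner_ξ_r (cg : IsCGSequence H g ξ r δ α β)
    (hsym : ∀ u v : V, ⟪H u, v⟫ = ⟪u, H v⟫)
    (hH : ∀ v : V, v ≠ 0 → 0 < ⟪v, H v⟫) (j : ℕ) :
    ⟪ξ j, r j⟫ = 0 := by
  rw [cg.ξ_eq_sum, sum_inner]
  refine Finset.sum_eq_zero fun i hi => ?_
  rw [real_inner_smul_left, real_inner_comm,
    (cg.orthogonality hsym hH j).2.1 i (Finset.mem_range.mp hi), mul_zero]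

theorem inner_ξ_δ_nonneg (cg : IsCGSequence H g ξ r δ α β)
    (hsym : ∀ u v : V, ⟪H u, v⟫ = ⟪u, H v⟫)
    (hH : ∀ v : V, v ≠ 0 → 0 < ⟪v, H v⟫) (j : ℕ) :
    0 ≤ ⟪ξ j, δ j⟫ := by
  induction j with
  | zero => rw [cg.ξ_zero, inner_zero_left]
  | succ n ih =>
    have hβ : 0 ≤ β (n + 1) := by
      rw [cg.β_succ]
      exact div_nonneg real_inner_self_nonneg real_inner_self_nonneg
    rw [cg.δ_succ, inner_add_right, inner_neg_right, cg.inner_ξ_r hsym hH, neg_zero, zero_add,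
      real_inner_smul_right, cg.ξ_succ, inner_add_left, real_inner_smul_left]
    exact mul_nonneg hβ (add_nonneg ih (mul_nonneg (cg.α_nonneg hH n) real_inner_self_nonneg))

theorem inner_δ_map_δ_le (cg : IsCGSequence H g ξ r δ α β)
    (hsym : ∀ u v : V, ⟪H u, v⟫ = ⟪u, H v⟫)
    (hH : ∀ v : V, v ≠ 0 → 0 < ⟪v, H v⟫) (j : ℕ) :
    ⟪δ j, H (δ j)⟫ ≤ ⟪r j, H (r j)⟫ := by
  cases j with
  | zero => rw [cg.δ_zero, ← cg.r_zero, map_neg, inner_neg_neg]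
  | succ n =>
    -- `r (n + 1) = β (n + 1) • δ n - δ (n + 1)` is an `H`-orthogonal decomposition
    have hconj : ⟪δ (n + 1), H (δ n)⟫ = 0 :=
      (cg.orthogonality hsym hH (n + 1)).2.2 n n.lt_succ_self
    have hr : r (n + 1) = β (n + 1) • δ n - δ (n + 1) := by rw [cg.δ_succ]; abel
    have hsym' : ⟪δ n, H (δ (n + 1))⟫ = 0 := by rw [← hsym, real_inner_comm, hconj]
    rw [hr, map_sub, map_smul, inner_sub_left, inner_sub_right, inner_sub_right,
      real_inner_smul_left, real_inner_smul_left, real_inner_smul_right, real_inner_smul_right,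
      hconj, hsym']
    nlinarith [mul_nonneg (sq_nonneg (β (n + 1))) (inner_map_self_nonneg_of_pos hH (δ n))]

theorem quadModel_ξ_succ (cg : IsCGSequence H g ξ r δ α β)
    (hsym : ∀ u v : V, ⟪H u, v⟫ = ⟪u, H v⟫)
    (hH : ∀ v : V, v ≠ 0 → 0 < ⟪v, H v⟫) (φx : ℝ)
    (j : ℕ) :
    quadModel φx g H (ξ (j + 1)) = quadModel φx g H (ξ j) - α j * ⟪r j, r j⟫ / 2 := by
  have hrδ := cg.inner_r_δ_self hsym hH j
  rw [cg.ξ_succ, quadModel_add_smul hsym, ← cg.r_eq, hrδ, sq, mul_div_right_comm, mul_assoc,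
    cg.α_mul_curv hH hrδ]
  ring

theorem inner_r_self_le_model_decrease (cg : IsCGSequence H g ξ r δ α β)
    (hsym : ∀ u v : V, ⟪H u, v⟫ = ⟪u, H v⟫)
    (hH : ∀ v : V, v ≠ 0 → 0 < ⟪v, H v⟫) (j : ℕ) :
    ⟪r j, r j⟫ ≤ 2 * ‖H‖ * (quadModel 0 g H (ξ j) - quadModel 0 g H (ξ (j + 1))) := by
  rw [cg.quadModel_ξ_succ hsym hH, sub_sub_cancel]
  rcases (real_inner_self_nonneg (x := r j)).eq_or_lt with hR | hR
  · rw [← hR]; simp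
  have hcurv : ⟪δ j, H (δ j)⟫ ≤ ‖H‖ * ⟪r j, r j⟫ :=
    calc ⟪δ j, H (δ j)⟫ ≤ ⟪r j, H (r j)⟫ := cg.inner_δ_map_δ_le hsym hH j
      _ ≤ ‖r j‖ * ‖H (r j)‖ := real_inner_le_norm _ _
      _ ≤ ‖r j‖ * (‖H‖ * ‖r j‖) := by gcongr; exact H.le_opNorm _
      _ = ‖H‖ * ⟪r j, r j⟫ := by rw [real_inner_self_eq_norm_sq]; ring
  have hαcurv := cg.α_mul_curv hH (cg.inner_r_δ_self hsym hH j)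
  refine le_of_mul_le_mul_right ?_ hR
  nlinarith [mul_le_mul_of_nonneg_left hcurv (cg.α_nonneg hH j)]

theorem tendsto_r (cg : IsCGSequence H g ξ r δ α β)
    (hsym : ∀ u v : V, ⟪H u, v⟫ = ⟪u, H v⟫)
    (hH : ∀ v : V, v ≠ 0 → 0 < ⟪v, H v⟫) {x : V}
    (hx : H x = -g) : Tendsto r atTop (𝓝 0) := by
  have hR : Tendsto (fun j => ⟪r j, r j⟫) atTop (𝓝 0) :=
    tendsto_zero_of_le_sub_succ (fun _ => real_inner_self_nonneg)
      (f := fun j => 2 * ‖H‖ * quadModel 0 g H (ξ j)) (c := 2 * ‖H‖ * quadModel 0 g H x)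
      (fun j => by rw [← mul_sub]; exact cg.inner_r_self_le_model_decrease hsym hH j)
      (fun j => mul_le_mul_of_nonneg_left
        (quadModel_le_of_map_eq_neg hsym (inner_map_self_nonneg_of_pos hH) 0 hx _)
        (by positivity))
  rw [tendsto_zero_iff_norm_tendsto_zero]
  simpa [real_inner_self_eq_norm_sq, Real.sqrt_sq (norm_nonneg _)] using hR.sqrt

theorem tendsto_ξ (cg : IsCGSequence H g ξ r δ α β)
    (hsym : ∀ u v : V, ⟪H u, v⟫ = ⟪u, H v⟫)
    (hH : ∀ v : V, v ≠ 0 → 0 < ⟪v, H v⟫)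
    {Hinv : V →L[ℝ] V} (hleft : ∀ v, Hinv (H v) = v) (hright : ∀ v, H (Hinv v) = v) :
    Tendsto ξ atTop (𝓝 (Hinv (-g))) := by
  have hξ : ξ = fun j => Hinv (r j - g) := by
    ext j
    rw [cg.r_eq, add_sub_cancel_left, hleft]
  rw [hξ, ← zero_sub]
  exact (Hinv.continuous.tendsto _).comp ((cg.tendsto_r hsym hH (hright (-g))).sub_const g)

theorem norm_le_norm_add_smul_δ (cg : IsCGSequence H g ξ r δ α β)
    (hsym : ∀ u v : V, ⟪H u, v⟫ = ⟪u, H v⟫)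
    (hH : ∀ v : V, v ≠ 0 → 0 < ⟪v, H v⟫) {j : ℕ}
    {t : ℝ} (ht : 0 ≤ t) (htα : t ≤ α j) :
    ‖ξ j‖ ≤ ‖ξ j + t • δ j‖ ∧ ‖ξ j + t • δ j‖ ≤ ‖ξ (j + 1)‖ := by
  have hmono := monotoneOn_norm_add_smul (cg.inner_ξ_δ_nonneg hsym hH j)
  have h0 : ‖ξ j + (0 : ℝ) • δ j‖ ≤ ‖ξ j + t • δ j‖ := hmono Set.self_mem_Ici ht ht
  rw [zero_smul, add_zero] at h0
  exact ⟨h0, cg.ξ_succ j ▸ hmono ht (ht.trans htα) htα⟩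

theorem norm_ξ_monotone (cg : IsCGSequence H g ξ r δ α β)
    (hsym : ∀ u v : V, ⟪H u, v⟫ = ⟪u, H v⟫)
    (hH : ∀ v : V, v ≠ 0 → 0 < ⟪v, H v⟫) :
    Monotone fun j => ‖ξ j‖ :=
  monotone_nat_of_le_succ fun j =>
    (cg.norm_le_norm_add_smul_δ hsym hH (cg.α_nonneg hH j) le_rfl).1.trans
      (cg.norm_le_norm_add_smul_δ hsym hH (cg.α_nonneg hH j) le_rfl).2

theorem quadModel_add_smul_δ_le (cg : IsCGSequence H g ξ r δ α β)
    (hsym : ∀ u v : V, ⟪H u, v⟫ = ⟪u, H v⟫)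
    (hH : ∀ v : V, v ≠ 0 → 0 < ⟪v, H v⟫) (φx : ℝ)
    {j : ℕ} {t : ℝ} (ht : 0 ≤ t) (htα : t ≤ α j) :
    quadModel φx g H (ξ j + t • δ j) ≤ quadModel φx g H (ξ j) := by
  have hrδ := cg.inner_r_δ_self hsym hH j
  refine quadModel_add_smul_le hsym φx g _ _ ht ?_
  rw [← cg.r_eq, hrδ, ← cg.α_mul_curv hH hrδ]
  nlinarith [mul_le_mul_of_nonneg_right htα (inner_map_self_nonneg_of_pos hH (δ j)),
    mul_nonneg (cg.α_nonneg hH j) (inner_map_self_nonneg_of_pos hH (δ j))]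

end IsCGSequence

end

theorem stmt_4_general
    {V : Type*} [NormedAddCommGroup V] [InnerProductSpace ℝ V]
    (φx : ℝ) (g : V) (H : V →L[ℝ] V)
    (hsym : ∀ u v : V, ⟪H u, v⟫ = ⟪u, H v⟫)
    (m : V → ℝ) (hm : ∀ ξ, m ξ = φx + ⟪g, ξ⟫ + (1/2) * ⟪H ξ, ξ⟫)
    (ξ r δ : ℕ → V) (α β : ℕ → ℝ)
    (hξ0 : ξ 0 = 0) (hr0 : r 0 = g) (hδ0 : δ 0 = -g)
    (hα : ∀ j, α j = ⟪r j, r j⟫ / ⟪δ j, H (δ j)⟫)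
    (hξs : ∀ j, ξ (j+1) = ξ j + α j • δ j)
    (hrs : ∀ j, r (j+1) = r j + α j • H (δ j))
    (hβ : ∀ j, β (j+1) = ⟪r (j+1), r (j+1)⟫ / ⟪r j, r j⟫)
    (hδs : ∀ j, δ (j+1) = -(r (j+1)) + β (j+1) • δ j)
    (N : ℕ)
    (hposdef : ∀ v : V, v ≠ 0 → 0 < ⟪v, H v⟫)
    (Hinv : V →L[ℝ] V) (hHinv : ∀ v, Hinv (H v) = v ∧ H (Hinv v) = v) :
    (∀ j < N, m (ξ (j+1)) ≤ m (ξ j) ∧ ‖ξ j‖ ≤ ‖ξ (j+1)‖) ∧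
    (∀ t : ℝ, 0 ≤ t → t ≤ α N →
      m (ξ N + t • δ N) ≤ m (ξ N) ∧
      ‖ξ N‖ ≤ ‖ξ N + t • δ N‖ ∧
      ‖ξ N + t • δ N‖ ≤ ‖Hinv (-g)‖) := by
  have cg : IsCGSequence H g ξ r δ α β := ⟨hξ0, hr0, hδ0, hα, hξs, hrs, hβ, hδs⟩
  obtain rfl : m = quadModel φx g H := funext hm
  have hlimit : ‖ξ (N + 1)‖ ≤ ‖Hinv (-g)‖ :=
    (cg.norm_ξ_monotone hsym hposdef).ge_of_tendsto
      (cg.tendsto_ξ hsym hposdef (fun v => (hHinv v).1) (fun v => (hHinv v).2)).norm (N + 1)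
  refine ⟨fun j _ => ⟨?_, cg.norm_ξ_monotone hsym hposdef j.le_succ⟩, fun t ht htα => ?_⟩
  · rw [cg.ξ_succ]
    exact cg.quadModel_add_smul_δ_le hsym hposdef φx (cg.α_nonneg hposdef j) le_rfl
  · obtain ⟨hlow, hup⟩ := cg.norm_le_norm_add_smul_δ hsym hposdef ht htα
    exact ⟨cg.quadModel_add_smul_δ_le hsym hposdef φx ht htα, hlow, hup.trans hlimit⟩

/-- Steihaug–Toint truncated CG on the quadratic model
`m ξ = φx + ⟨g, ξ⟩ + (1/2)⟨Hξ, ξ⟩`, starting from `ξ₀ = 0`: the model values are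
monotonically nonincreasing along the iterates (including a final truncated step
`η = ξ_N + t • δ_N` with `0 ≤ t ≤ α_N`), and the norms of the iterates are
monotonically nondecreasing, bounded above by `‖H⁻¹(−g)‖` when `H` is positive
definite. -/
theorem stmt_4
    {V : Type*} [NormedAddCommGroup V] [InnerProductSpace ℝ V]
    (φx : ℝ) (g : V) (H : V →L[ℝ] V)
    (hsym : ∀ u v : V, ⟪H u, v⟫ = ⟪u, H v⟫)
    (m : V → ℝ) (hm : ∀ ξ, m ξ = φx + ⟪g, ξ⟫ + (1/2) * ⟪H ξ, ξ⟫)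
    (ξ r δ : ℕ → V) (α β : ℕ → ℝ)
    (hξ0 : ξ 0 = 0) (hr0 : r 0 = g) (hδ0 : δ 0 = -g)
    (hα : ∀ j, α j = ⟪r j, r j⟫ / ⟪δ j, H (δ j)⟫)
    (hξs : ∀ j, ξ (j+1) = ξ j + α j • δ j)
    (hrs : ∀ j, r (j+1) = r j + α j • H (δ j))
    (hβ : ∀ j, β (j+1) = ⟪r (j+1), r (j+1)⟫ / ⟪r j, r j⟫)
    (hδs : ∀ j, δ (j+1) = -(r (j+1)) + β (j+1) • δ j)
    (N : ℕ)
    (hcurv : ∀ j ≤ N, 0 < ⟪δ j, H (δ j)⟫)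
    (hposdef : ∀ v : V, v ≠ 0 → 0 < ⟪v, H v⟫)
    (Hinv : V →L[ℝ] V) (hHinv : ∀ v, Hinv (H v) = v ∧ H (Hinv v) = v) :
    (∀ j < N, m (ξ (j+1)) ≤ m (ξ j) ∧ ‖ξ j‖ ≤ ‖ξ (j+1)‖) ∧
    (∀ t : ℝ, 0 ≤ t → t ≤ α N →
      m (ξ N + t • δ N) ≤ m (ξ N) ∧
      ‖ξ N‖ ≤ ‖ξ N + t • δ N‖ ∧
      ‖ξ N + t • δ N‖ ≤ ‖Hinv (-g)‖) :=
  stmt_4_general φx g H hsym m hm ξ r δ α β hξ0 hr0 hδ0 hα hξs hrs hβ hδs N hposdef Hinv hHinv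
end

section
/- For the quadratic q(t) = m(−t g) = φ(x) − t‖g‖² + (t²/2)⟨Hg, g⟩ with g ≠ 0, the minimum of q over {t ≥ 0 : t‖g‖ ≤ Δ} satisfies m(0) − min q ≥ (1/2)‖g‖ min{Δ, ‖g‖/‖H‖}. -/
/-!
Along the steepest-descent direction `-g`, parametrised by the step length `τ = t‖g‖`, the model is
the one-dimensional quadratic `m 0 - ‖g‖ τ + (κ/2) τ²` with curvature `κ = ⟪Hg, g⟫/‖g‖² ≤ ‖H‖`.
Either the full step `τ = Δ` already decreases it by at least `‖g‖ Δ / 2`, or the curvature is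
positive and the unconstrained minimiser `τ = ‖g‖/κ` lies inside the region, giving the decrease
`‖g‖²/(2κ) ≥ ‖g‖²/(2‖H‖)`.
-/

open scoped RealInnerProductSpace

theorem exists_mem_Icc_half_mul_min_le {b κ K R : ℝ} (hb : 0 ≤ b) (hR : 0 ≤ R) (hκK : κ ≤ K) :
    ∃ τ ∈ Set.Icc 0 R, 1 / 2 * b * min R (b / K) ≤ b * τ - κ / 2 * τ ^ 2 := by
  by_cases hfull : κ * R ≤ b
  · refine ⟨R, ⟨hR, le_rfl⟩, ?_⟩
    have hcurv : κ * R ^ 2 ≤ b * R := by nlinarith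
    nlinarith [min_le_left R (b / K), hcurv]
  · replace hfull := not_le.mp hfull
    have hκ : 0 < κ := by nlinarith
    refine ⟨b / κ, ⟨by positivity, (div_le_iff₀ hκ).mpr (by linarith)⟩, ?_⟩
    have hvalue : b * (b / κ) - κ / 2 * (b / κ) ^ 2 = 1 / 2 * b * (b / κ) := by
      field_simp; ring
    rw [hvalue]
    gcongr
    exact (min_le_right _ _).trans (div_le_div_of_nonneg_left hb hκ hκK)

theorem inner_map_self_div_norm_sq_le {V : Type*} [NormedAddCommGroup V] [InnerProductSpace ℝ V]
    (H : V →L[ℝ] V) (g : V) : ⟪H g, g⟫ / ‖g‖ ^ 2 ≤ ‖H‖ := by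
  rcases eq_or_ne g 0 with rfl | hg
  · simp
  rw [div_le_iff₀ (by positivity)]
  calc ⟪H g, g⟫ ≤ ‖H g‖ * ‖g‖ := real_inner_le_norm _ _
    _ ≤ ‖H‖ * ‖g‖ * ‖g‖ := by gcongr; exact H.le_opNorm g
    _ = ‖H‖ * ‖g‖ ^ 2 := by ring

theorem stmt_6_general
    {V : Type*} [NormedAddCommGroup V] [InnerProductSpace ℝ V]
    (φx : ℝ) (g : V) (hg : g ≠ 0) (H : V →L[ℝ] V)
    (Δ : ℝ) (hΔ : 0 < Δ)
    (m : V → ℝ) (hm : ∀ η, m η = φx + ⟪g, η⟫ + (1/2) * ⟪H η, η⟫) :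
    (1/2) * ‖g‖ * min Δ (‖g‖ / ‖H‖) ≤
      m 0 - sInf ((fun t : ℝ => m (-(t • g))) '' {t : ℝ | 0 ≤ t ∧ t * ‖g‖ ≤ Δ}) := by
  have hgn : 0 < ‖g‖ := norm_pos_iff.mpr hg
  set S := {t : ℝ | 0 ≤ t ∧ t * ‖g‖ ≤ Δ}
  have hS : S ⊆ Set.Icc 0 (Δ / ‖g‖) := fun t ⟨ht0, htΔ⟩ => ⟨ht0, (le_div_iff₀ hgn).mpr htΔ⟩
  have hbdd : BddBelow ((fun t : ℝ => m (-(t • g))) '' S) := by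
    refine (isCompact_Icc.bddBelow_image ?_).mono (Set.image_mono hS)
    simp only [hm]
    fun_prop
  obtain ⟨τ, ⟨hτ0, hτΔ⟩, hdecrease⟩ := exists_mem_Icc_half_mul_min_le hgn.le hΔ.le
    (inner_map_self_div_norm_sq_le H g)
  have ht : τ / ‖g‖ ∈ S := ⟨by positivity, by rwa [div_mul_cancel₀ _ hgn.ne']⟩
  calc (1/2) * ‖g‖ * min Δ (‖g‖ / ‖H‖)
      ≤ ‖g‖ * τ - ⟪H g, g⟫ / ‖g‖ ^ 2 / 2 * τ ^ 2 := hdecrease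
    _ = m 0 - m (-((τ / ‖g‖) • g)) := by
      simp only [hm, map_neg, map_smul, map_zero, inner_neg_left, inner_neg_right,
        real_inner_smul_left, real_inner_smul_right, real_inner_self_eq_norm_sq, inner_zero_right]
      field_simp
      ring
    _ ≤ m 0 - sInf ((fun t : ℝ => m (-(t • g))) '' S) := by
      gcongr
      exact csInf_le hbdd ⟨_, ht, rfl⟩

/-- Cauchy point decrease bound.  For the quadratic
`q(t) = m(−t g) = φx − t‖g‖² + (t²/2)⟨Hg, g⟩` with `g ≠ 0`, the minimum of `q` over
`{t ≥ 0 : t‖g‖ ≤ Δ}` satisfies `m 0 − min q ≥ (1/2)‖g‖ min{Δ, ‖g‖/‖H‖}`. -/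
theorem stmt_6
    {V : Type*} [NormedAddCommGroup V] [InnerProductSpace ℝ V]
    (φx : ℝ) (g : V) (hg : g ≠ 0) (H : V →L[ℝ] V)
    (hsym : ∀ u v : V, ⟪H u, v⟫ = ⟪u, H v⟫)
    (Δ : ℝ) (hΔ : 0 < Δ)
    (m : V → ℝ) (hm : ∀ η, m η = φx + ⟪g, η⟫ + (1/2) * ⟪H η, η⟫) :
    (1/2) * ‖g‖ * min Δ (‖g‖ / ‖H‖) ≤
      m 0 - sInf ((fun t : ℝ => m (-(t • g))) '' {t : ℝ | 0 ≤ t ∧ t * ‖g‖ ≤ Δ}) :=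
  stmt_6_general φx g hg H Δ hΔ m hm
end

section
/- Let x* be a nondegenerate local minimizer of φ : M → ℝ, i.e., grad φ(x*) = 0 and every element of the Clarke generalized covariant derivative ∂grad φ(x*) is positive definite. Then there exist λ₁, λ₂ > 0 and δ > 0 such that for every x ∈ B_δ(x*) and every H ∈ ∂grad φ(x): λ₁ ≤ min_{‖ξ‖=1} ⟨ξ, Hξ⟩, ‖H‖ ≤ λ₂, and ‖H⁻¹‖ ≤ λ₁⁻¹. -/
open scoped RealInnerProductSpace NNReal

/-! A positive definite operator has a positive lower bound `μ` for its quadratic form on the unit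
sphere; by compactness of `∂grad φ(x*)` × sphere this bound is uniform over `∂grad φ(x*)`.
Upper semicontinuity puts every `H ∈ ∂grad φ(x)`, `x` near `x*`, within half that bound of
`∂grad φ(x*)` in operator norm, so the quadratic form of `H` keeps half the bound, which also
bounds `‖H⁻¹‖` through `‖H v‖ ≥ (μ / 2) ‖v‖`. -/

section Coercive

variable {E : Type*} [NormedAddCommGroup E] [InnerProductSpace ℝ E]

theorem exists_pos_le_inner_map_self_of_isCompact [FiniteDimensional ℝ E]
    {K : Set (E →L[ℝ] E)} (hK : IsCompact K)
    (hpos : ∀ H ∈ K, ∀ ξ : E, ξ ≠ 0 → 0 < ⟪ξ, H ξ⟫) :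
    ∃ c > 0, ∀ H ∈ K, ∀ ξ : E, ‖ξ‖ = 1 → c ≤ ⟪ξ, H ξ⟫ := by
  have hcont : Continuous fun p : (E →L[ℝ] E) × E => ⟪p.2, p.1 p.2⟫ :=
    continuous_snd.inner (continuous_fst.clm_apply continuous_snd)
  obtain ⟨c, hc, hle⟩ := (hK.prod (isCompact_sphere (0 : E) 1)).exists_forall_le'
    hcont.continuousOn fun p ⟨hH, hξ⟩ =>
      hpos p.1 hH p.2 (ne_zero_of_mem_unit_sphere ⟨p.2, hξ⟩)
  exact ⟨c, hc, fun H hH ξ hξ => hle (H, ξ) ⟨hH, mem_sphere_zero_iff_norm.mpr hξ⟩⟩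

theorem inner_map_self_sub_le (H H' : E →L[ℝ] E) (ξ : E) :
    ⟪ξ, H' ξ⟫ - ‖H - H'‖ * ‖ξ‖ ^ 2 ≤ ⟪ξ, H ξ⟫ := by
  have hdiff : ⟪ξ, H' ξ⟫ - ⟪ξ, H ξ⟫ ≤ ‖H - H'‖ * ‖ξ‖ ^ 2 :=
    calc ⟪ξ, H' ξ⟫ - ⟪ξ, H ξ⟫ = ⟪ξ, (H' - H) ξ⟫ := by
          rw [sub_apply, inner_sub_right]
      _ ≤ ‖ξ‖ * ‖(H' - H) ξ‖ := real_inner_le_norm _ _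
      _ ≤ ‖ξ‖ * (‖H' - H‖ * ‖ξ‖) := by gcongr; exact (H' - H).le_opNorm ξ
      _ = ‖H - H'‖ * ‖ξ‖ ^ 2 := by rw [norm_sub_rev]; ring
  linarith

theorem mul_norm_sq_le_inner_map_self {H : E →L[ℝ] E} {c : ℝ}
    (h : ∀ ξ : E, ‖ξ‖ = 1 → c ≤ ⟪ξ, H ξ⟫) (v : E) : c * ‖v‖ ^ 2 ≤ ⟪v, H v⟫ := by
  rcases eq_or_ne v 0 with rfl | hv
  · simp
  have hv' : ‖v‖ ≠ 0 := norm_ne_zero_iff.mpr hv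
  have hξ : ‖‖v‖⁻¹ • v‖ = 1 := by rw [norm_smul, norm_inv, norm_norm, inv_mul_cancel₀ hv']
  have hscale : ⟪v, H v⟫ = ‖v‖ ^ 2 * ⟪‖v‖⁻¹ • v, H (‖v‖⁻¹ • v)⟫ := by
    rw [map_smul, real_inner_smul_left, real_inner_smul_right]
    field_simp
  rw [hscale, mul_comm]
  exact mul_le_mul_of_nonneg_left (h _ hξ) (sq_nonneg _)

theorem exists_inverse_of_coercive [CompleteSpace E] {H : E →L[ℝ] E} {c : ℝ} (hc : 0 < c)
    (hcoer : ∀ v : E, c * ‖v‖ ^ 2 ≤ ⟪v, H v⟫) :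
    ∃ Hinv : E →L[ℝ] E, (∀ v, Hinv (H v) = v ∧ H (Hinv v) = v) ∧ ‖Hinv‖ ≤ c⁻¹ := by
  lift c to ℝ≥0 using hc.le
  have hcoer' : ∀ v : E, ‖v‖ ^ 2 * c ≤ ‖⟪H v, v⟫‖ := fun v => by
    rw [real_inner_comm, Real.norm_eq_abs, mul_comm]
    exact (hcoer v).trans (le_abs_self _)
  have hanti := H.antilipschitz_of_forall_le_inner_map hc hcoer'
  obtain ⟨u, rfl⟩ := H.isUnit_of_forall_le_norm_inner_map hc hcoer'
  have hright : ∀ v, (u : E →L[ℝ] E) ((↑u⁻¹ : E →L[ℝ] E) v) = v := fun v => congr($(u.mul_inv) v)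
  refine ⟨↑u⁻¹, fun v => ⟨congr($(u.inv_mul) v), hright v⟩, ?_⟩
  refine ContinuousLinearMap.opNorm_le_bound _ (inv_nonneg.mpr hc.le) fun v => ?_
  simpa [hright] using hanti.le_mul_norm (map_zero _) ((↑u⁻¹ : E →L[ℝ] E) v)

end Coercive

theorem stmt_7_general
    {E : Type*} [NormedAddCommGroup E] [InnerProductSpace ℝ E] [FiniteDimensional ℝ E]
    {M : Type*} [MetricSpace M]
    (Dgrad : M → Set (E →L[ℝ] E)) (xs : M)
    (hcompact : IsCompact (Dgrad xs))
    (hposdef : ∀ H ∈ Dgrad xs, ∀ ξ : E, ξ ≠ 0 → 0 < ⟪ξ, H ξ⟫)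
    (husc : ∀ ε > 0, ∃ δ > 0, ∀ x ∈ Metric.ball xs δ, ∀ H ∈ Dgrad x,
      ∃ H' ∈ Dgrad xs, ‖H - H'‖ ≤ ε) :
    ∃ lam₁ > (0:ℝ), ∃ lam₂ > (0:ℝ), ∃ δ > (0:ℝ),
      ∀ x ∈ Metric.ball xs δ, ∀ H ∈ Dgrad x,
        (∀ ξ : E, ‖ξ‖ = 1 → lam₁ ≤ ⟪ξ, H ξ⟫) ∧ ‖H‖ ≤ lam₂ ∧
        ∃ Hinv : E →L[ℝ] E, (∀ v, Hinv (H v) = v ∧ H (Hinv v) = v) ∧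
          ‖Hinv‖ ≤ lam₁⁻¹ := by
  obtain ⟨μ, hμ, hμle⟩ := exists_pos_le_inner_map_self_of_isCompact hcompact hposdef
  obtain ⟨R, hR, hRle⟩ := hcompact.isBounded.exists_pos_norm_le
  obtain ⟨δ, hδ, hnear⟩ := husc (μ / 2) (half_pos hμ)
  refine ⟨μ / 2, half_pos hμ, R + μ / 2, by positivity, δ, hδ, fun x hx H hH => ?_⟩
  obtain ⟨H', hH', hHH'⟩ := hnear x hx H hH
  have hlow : ∀ ξ : E, ‖ξ‖ = 1 → μ / 2 ≤ ⟪ξ, H ξ⟫ := fun ξ hξ => by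
    have := inner_map_self_sub_le H H' ξ
    rw [hξ, one_pow, mul_one] at this
    linarith [hμle H' hH' ξ hξ]
  refine ⟨hlow, ?_, exists_inverse_of_coercive (half_pos hμ) (mul_norm_sq_le_inner_map_self hlow)⟩
  calc ‖H‖ = ‖H' + (H - H')‖ := by rw [add_sub_cancel]
    _ ≤ ‖H'‖ + ‖H - H'‖ := norm_add_le _ _
    _ ≤ R + μ / 2 := add_le_add (hRle H' hH') hHH'

/-- uniform eigenvalue/norm bounds for the Clarke generalized covariant
derivative `Dgrad` near a nondegenerate local minimizer `xs` of `φ` (all elements of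
`Dgrad xs` positive definite, `grad φ(xs) = 0`).  Tangent spaces are identified with
`E` via parallel transport, under which `Dgrad` is self-adjoint valued, nonempty and
compact at `xs`, and upper semicontinuous. -/
theorem stmt_7
    {E : Type*} [NormedAddCommGroup E] [InnerProductSpace ℝ E] [FiniteDimensional ℝ E]
    {M : Type*} [MetricSpace M]
    (grad : M → E) (Dgrad : M → Set (E →L[ℝ] E)) (xs : M)
    (hgrad0 : grad xs = 0)
    (hne : (Dgrad xs).Nonempty)
    (hcompact : IsCompact (Dgrad xs))
    (hsym : ∀ x : M, ∀ H ∈ Dgrad x, ∀ u v : E, ⟪H u, v⟫ = ⟪u, H v⟫)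
    (hposdef : ∀ H ∈ Dgrad xs, ∀ ξ : E, ξ ≠ 0 → 0 < ⟪ξ, H ξ⟫)
    (husc : ∀ ε > 0, ∃ δ > 0, ∀ x ∈ Metric.ball xs δ, ∀ H ∈ Dgrad x,
      ∃ H' ∈ Dgrad xs, ‖H - H'‖ ≤ ε) :
    ∃ lam₁ > (0:ℝ), ∃ lam₂ > (0:ℝ), ∃ δ > (0:ℝ),
      ∀ x ∈ Metric.ball xs δ, ∀ H ∈ Dgrad x,
        (∀ ξ : E, ‖ξ‖ = 1 → lam₁ ≤ ⟪ξ, H ξ⟫) ∧ ‖H‖ ≤ lam₂ ∧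
        ∃ Hinv : E →L[ℝ] E, (∀ v, Hinv (H v) = v ∧ H (Hinv v) = v) ∧
          ‖Hinv‖ ≤ lam₁⁻¹ :=
  stmt_7_general Dgrad xs hcompact hposdef husc
end

section
/- A nondegenerate local minimizer x* of φ (grad φ(x*) = 0 and all H ∈ ∂grad φ(x*) positive definite) is an isolated stationary point: there is a neighborhood U of x* in which x* is the only point where grad φ vanishes. -/
/-!
Compactness of `∂grad φ(x*)` and of the unit sphere makes positive definiteness uniform:
`μ ‖ξ‖² ≤ ⟪ξ, H ξ⟫` for some `μ > 0`. By upper semicontinuity, every `H ∈ ∂grad φ(y)` with `y`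
near `x*` lies within `μ / 2` of such an operator, hence `(μ / 2) ‖v‖ ≤ ‖H v‖`. The mean-value
form of Taylor's theorem turns this into the error bound `(μ / 2) d(x*, x) ≤ ‖grad φ(x)‖` near
`x*`, so the gradient vanishes there only at `x*`.
-/

open scoped RealInnerProductSpace

section

variable {E : Type*} [NormedAddCommGroup E] [InnerProductSpace ℝ E]

theorem IsCompact.exists_pos_mul_sq_norm_le_inner_apply [FiniteDimensional ℝ E]
    {K : Set (E →L[ℝ] E)} (hK : IsCompact K)
    (hpos : ∀ H ∈ K, ∀ ξ : E, ξ ≠ 0 → 0 < ⟪ξ, H ξ⟫) :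
    ∃ μ > 0, ∀ H ∈ K, ∀ ξ : E, μ * ‖ξ‖ ^ 2 ≤ ⟪ξ, H ξ⟫ := by
  have hcont : Continuous fun p : (E →L[ℝ] E) × E => ⟪p.2, p.1 p.2⟫ :=
    continuous_snd.inner (continuous_fst.clm_apply continuous_snd)
  obtain ⟨μ, hμ, hμK⟩ := (hK.prod (isCompact_sphere (0 : E) 1)).exists_forall_le'
    hcont.continuousOn (a := 0) fun p hp ↦
      hpos p.1 hp.1 p.2 (ne_zero_of_mem_unit_sphere ⟨p.2, hp.2⟩)
  refine ⟨μ, hμ, fun H hH ξ ↦ ?_⟩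
  rcases eq_or_ne ξ 0 with rfl | hξ
  · simp
  have hnorm : 0 < ‖ξ‖ := norm_pos_iff.mpr hξ
  -- evaluate the bound at the unit vector `‖ξ‖⁻¹ • ξ` and rescale
  have hunit := hμK (H, ‖ξ‖⁻¹ • ξ) ⟨hH, by simp [norm_smul, hnorm.ne']⟩
  simp only [map_smul, inner_smul_left, inner_smul_right, RCLike.conj_to_real] at hunit
  rwa [← mul_assoc, ← mul_inv, ← sq, le_inv_mul_iff₀ (by positivity), mul_comm] at hunit

theorem ContinuousLinearMap.sub_mul_norm_le_norm_apply {H H' : E →L[ℝ] E} {μ ε : ℝ} {ξ : E}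
    (hH' : μ * ‖ξ‖ ^ 2 ≤ ⟪ξ, H' ξ⟫) (hHH' : ‖H - H'‖ ≤ ε) :
    (μ - ε) * ‖ξ‖ ≤ ‖H ξ‖ := by
  rcases eq_or_ne ξ 0 with rfl | hξ
  · simp
  have hdiff : |⟪ξ, (H - H') ξ⟫| ≤ ε * ‖ξ‖ ^ 2 :=
    calc |⟪ξ, (H - H') ξ⟫| ≤ ‖ξ‖ * ‖(H - H') ξ‖ := abs_real_inner_le_norm _ _
      _ ≤ ‖ξ‖ * (ε * ‖ξ‖) := by
          gcongr; exact (H - H').le_of_opNorm_le hHH' ξ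
      _ = ε * ‖ξ‖ ^ 2 := by ring
  have hcoer : (μ - ε) * ‖ξ‖ ^ 2 ≤ ‖ξ‖ * ‖H ξ‖ := by
    have hsplit : ⟪ξ, H ξ⟫ = ⟪ξ, H' ξ⟫ + ⟪ξ, (H - H') ξ⟫ := by
      rw [sub_apply, inner_sub_right]; ring
    linarith [(abs_le.mp hdiff).1, real_inner_le_norm ξ (H ξ)]
  rw [sq, ← mul_assoc, mul_comm _ ‖ξ‖] at hcoer
  exact le_of_mul_le_mul_left hcoer (norm_pos_iff.mpr hξ)

end

theorem stmt_8_general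
    {E : Type*} [NormedAddCommGroup E] [InnerProductSpace ℝ E] [FiniteDimensional ℝ E]
    {M : Type*} [MetricSpace M]
    (grad : M → E) (Dgrad : M → Set (E →L[ℝ] E)) (xs : M)
    (hcompact : IsCompact (Dgrad xs))
    (hposdef : ∀ H ∈ Dgrad xs, ∀ ξ : E, ξ ≠ 0 → 0 < ⟪ξ, H ξ⟫)
    (husc : ∀ ε > 0, ∃ δ > 0, ∀ x ∈ Metric.ball xs δ, ∀ H ∈ Dgrad x,
      ∃ H' ∈ Dgrad xs, ‖H - H'‖ ≤ ε)
    (δT : ℝ) (hδT : 0 < δT)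
    (hTaylor : ∀ x ∈ Metric.ball xs δT, ∃ y : M, ∃ H ∈ Dgrad y, ∃ v : E,
      dist xs y ≤ dist xs x ∧ ‖v‖ = dist xs x ∧ ‖grad x‖ = ‖H v‖) :
    ∃ U ∈ nhds xs, ∀ x ∈ U, grad x = 0 → x = xs := by
  obtain ⟨μ, hμ, hcoer⟩ := hcompact.exists_pos_mul_sq_norm_le_inner_apply hposdef
  obtain ⟨δ, hδ, hδH⟩ := husc (μ / 2) (half_pos hμ)
  have hbound : ∀ x ∈ Metric.ball xs (min δ δT), μ / 2 * dist xs x ≤ ‖grad x‖ := by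
    intro x hx
    rw [Metric.mem_ball, dist_comm, lt_min_iff] at hx
    obtain ⟨y, H, hH, v, hyx, hv, hgrad⟩ :=
      hTaylor x (by rw [Metric.mem_ball, dist_comm]; exact hx.2)
    obtain ⟨H', hH', hHH'⟩ :=
      hδH y (by rw [Metric.mem_ball, dist_comm]; exact hyx.trans_lt hx.1) H hH
    rw [hgrad, ← hv]
    simpa [sub_half] using ContinuousLinearMap.sub_mul_norm_le_norm_apply (hcoer H' hH' v) hHH'
  refine ⟨_, Metric.ball_mem_nhds xs (lt_min hδ hδT), fun x hx hx0 ↦ ?_⟩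
  have hdist := hbound x hx
  rw [hx0, norm_zero] at hdist
  exact (dist_le_zero.mp (nonpos_of_mul_nonpos_right hdist (half_pos hμ))).symm

/-- a nondegenerate local minimizer `xs` of `φ` (gradient vanishes, all
elements of the Clarke generalized covariant derivative `Dgrad xs` positive definite)
is an isolated stationary point.  The mean-value form of Taylor's theorem along the
geodesic from `xs` to `x` is supplied as hypothesis `hTaylor` (with tangent spaces
identified with `E` via parallel transport, which is an isometry). -/
theorem stmt_8
    {E : Type*} [NormedAddCommGroup E] [InnerProductSpace ℝ E] [FiniteDimensional ℝ E]
    {M : Type*} [MetricSpace M]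
    (grad : M → E) (Dgrad : M → Set (E →L[ℝ] E)) (xs : M)
    (hgrad0 : grad xs = 0)
    (hne : (Dgrad xs).Nonempty)
    (hcompact : IsCompact (Dgrad xs))
    (hsym : ∀ x : M, ∀ H ∈ Dgrad x, ∀ u v : E, ⟪H u, v⟫ = ⟪u, H v⟫)
    (hposdef : ∀ H ∈ Dgrad xs, ∀ ξ : E, ξ ≠ 0 → 0 < ⟪ξ, H ξ⟫)
    (husc : ∀ ε > 0, ∃ δ > 0, ∀ x ∈ Metric.ball xs δ, ∀ H ∈ Dgrad x,
      ∃ H' ∈ Dgrad xs, ‖H - H'‖ ≤ ε)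
    (δT : ℝ) (hδT : 0 < δT)
    (hTaylor : ∀ x ∈ Metric.ball xs δT, ∃ y : M, ∃ H ∈ Dgrad y, ∃ v : E,
      dist xs y ≤ dist xs x ∧ ‖v‖ = dist xs x ∧ ‖grad x‖ = ‖H v‖) :
    ∃ U ∈ nhds xs, ∀ x ∈ U, grad x = 0 → x = xs :=
  stmt_8_general grad Dgrad xs hcompact hposdef husc δT hδT hTaylor
end

section
/- (Semismooth Newton step error bound) Let x* be a nondegenerate local minimizer of φ with grad φ μ-order semismooth at x*. Then there exist β > 0 and a neighborhood U of x* such that for all x ∈ U and H ∈ ∂grad φ(x), ‖H⁻¹ grad φ(x) + exp_x^{-1}(x*)‖ ≤ β dist(x, x*)^{1+μ}. -/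
theorem ContinuousLinearMap.norm_apply_add_le_of_leftInverse {𝕜 E F : Type*}
    [NontriviallyNormedField 𝕜] [SeminormedAddCommGroup E] [SeminormedAddCommGroup F]
    [NormedSpace 𝕜 E] [NormedSpace 𝕜 F] (H : E →L[𝕜] F) (G : F →L[𝕜] E)
    (hGH : ∀ v, G (H v) = v) (g : F) (v : E) :
    ‖G g + v‖ ≤ ‖G‖ * ‖g + H v‖ := by
  calc ‖G g + v‖ = ‖G (g + H v)‖ := by rw [map_add, hGH]
    _ ≤ ‖G‖ * ‖g + H v‖ := G.le_opNorm _

theorem stmt_13_general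
    {E : Type*} [NormedAddCommGroup E] [InnerProductSpace ℝ E]
    {M : Type*} [MetricSpace M]
    (grad : M → E) (Dgrad : M → Set (E →L[ℝ] E))
    (P : M → M → (E →L[ℝ] E)) (Log : M → M → E) (xs : M)
    (μ : ℝ)
    (hgrad0 : grad xs = 0)
    (hPiso : ∀ p q : M, ∀ v : E, ‖P p q v‖ = ‖v‖)
    (hss : ∀ ε > 0, ∃ δ > 0, ∀ y : M, dist y xs < δ → ∀ H ∈ Dgrad y,
      ‖grad xs - P y xs (grad y + H (Log y xs))‖ ≤ ε * dist xs y ^ (1 + μ))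
    (β₀ δ₀ : ℝ) (hβ₀ : 0 < β₀) (hδ₀ : 0 < δ₀)
    (hinvbound : ∀ x ∈ Metric.ball xs δ₀, ∀ H ∈ Dgrad x,
      ∀ Hinv : E →L[ℝ] E, (∀ v, Hinv (H v) = v ∧ H (Hinv v) = v) → ‖Hinv‖ ≤ β₀) :
    ∃ β > 0, ∃ δ > 0, ∀ x ∈ Metric.ball xs δ, ∀ H ∈ Dgrad x,
      ∀ Hinv : E →L[ℝ] E, (∀ v, Hinv (H v) = v ∧ H (Hinv v) = v) →
        ‖Hinv (grad x) + Log x xs‖ ≤ β * dist x xs ^ (1 + μ) := by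
  obtain ⟨δ₁, hδ₁, hss₁⟩ := hss 1 one_pos
  refine ⟨β₀, hβ₀, min δ₀ δ₁, lt_min hδ₀ hδ₁, fun x hx H hH Hinv hHinv => ?_⟩
  rw [Metric.mem_ball, lt_min_iff] at hx
  have hresidual : ‖grad x + H (Log x xs)‖ ≤ dist x xs ^ (1 + μ) := by
    simpa only [hgrad0, zero_sub, norm_neg, hPiso, one_mul, dist_comm xs x] using
      hss₁ x hx.2 H hH
  calc ‖Hinv (grad x) + Log x xs‖ ≤ ‖Hinv‖ * ‖grad x + H (Log x xs)‖ :=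
        H.norm_apply_add_le_of_leftInverse Hinv (fun v => (hHinv v).1) _ _
    _ ≤ β₀ * dist x xs ^ (1 + μ) :=
        mul_le_mul (hinvbound x (Metric.mem_ball.2 hx.1) H hH Hinv hHinv) hresidual
          (norm_nonneg _) hβ₀.le

/-- semismooth Newton step error bound: near a nondegenerate local
minimizer `xs` of `φ` with `grad φ` being `μ`-order semismooth at `xs`, there exist
`β > 0` and a neighborhood (a ball of radius `δ`) such that for every `x` in it and
every `H ∈ ∂grad φ(x)` (with inverse `Hinv`),
`‖H⁻¹ grad φ(x) + exp_x⁻¹(xs)‖ ≤ β dist(x,xs)^(1+μ)`. -/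
theorem stmt_13
    {E : Type*} [NormedAddCommGroup E] [InnerProductSpace ℝ E]
    {M : Type*} [MetricSpace M]
    (grad : M → E) (Dgrad : M → Set (E →L[ℝ] E))
    (P : M → M → (E →L[ℝ] E)) (Log : M → M → E) (xs : M)
    (μ : ℝ) (hμ : 0 ≤ μ)
    (hgrad0 : grad xs = 0)
    (hPiso : ∀ p q : M, ∀ v : E, ‖P p q v‖ = ‖v‖)
    (hLog : ∀ y : M, ‖Log y xs‖ = dist y xs)
    (hss : ∀ ε > 0, ∃ δ > 0, ∀ y : M, dist y xs < δ → ∀ H ∈ Dgrad y,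
      ‖grad xs - P y xs (grad y + H (Log y xs))‖ ≤ ε * dist xs y ^ (1 + μ))
    (β₀ δ₀ : ℝ) (hβ₀ : 0 < β₀) (hδ₀ : 0 < δ₀)
    (hinvbound : ∀ x ∈ Metric.ball xs δ₀, ∀ H ∈ Dgrad x,
      ∀ Hinv : E →L[ℝ] E, (∀ v, Hinv (H v) = v ∧ H (Hinv v) = v) → ‖Hinv‖ ≤ β₀) :
    ∃ β > 0, ∃ δ > 0, ∀ x ∈ Metric.ball xs δ, ∀ H ∈ Dgrad x,
      ∀ Hinv : E →L[ℝ] E, (∀ v, Hinv (H v) = v ∧ H (Hinv v) = v) →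
        ‖Hinv (grad x) + Log x xs‖ ≤ β * dist x xs ^ (1 + μ) :=
  stmt_13_general grad Dgrad P Log xs μ hgrad0 hPiso hss β₀ δ₀ hβ₀ hδ₀ hinvbound
end

section
/- (Euclidean superlinear step estimate) Let φ : ℝⁿ → ℝ be C¹ with grad φ semismooth of order μ at a point x* where grad φ(x*) = 0 and every H ∈ ∂(grad φ)(x*) is positive definite. Then there exist c, δ > 0 such that for all x ∈ B_δ(x*) and H ∈ ∂(grad φ)(x), ‖x − H⁻¹ grad φ(x) − x*‖ ≤ c ‖x − x*‖^{1+μ}. -/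
/-!
Near `xs` every `H ∈ DG x` is within `λ/2` of some `H' ∈ DG xs`, and compactness of `DG xs`
makes all of these uniformly coercive, `λ ‖ξ‖² ≤ ⟪ξ, H' ξ⟫`. Hence `‖H ξ‖ ≥ (λ/2) ‖ξ‖`, so `H` is
invertible with `‖H⁻¹‖ ≤ 2/λ`. Since `G xs = 0`, the Newton error is
`x - H⁻¹ G x - xs = H⁻¹ (G xs - G x - H (xs - x))`, and semismoothness bounds the right-hand side
by `(2/λ) ‖x - xs‖^(1+μ)`.
-/

open scoped RealInnerProductSpace

section InnerProductSpace

variable {E : Type*} [NormedAddCommGroup E] [InnerProductSpace ℝ E]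

theorem inner_apply_self_eq_norm_sq_mul_normalize (H : E →L[ℝ] E) {ξ : E} (hξ : ξ ≠ 0) :
    ⟪ξ, H ξ⟫ = ‖ξ‖ ^ 2 * ⟪‖ξ‖⁻¹ • ξ, H (‖ξ‖⁻¹ • ξ)⟫ := by
  have hξ' : ‖ξ‖ ≠ 0 := norm_ne_zero_iff.mpr hξ
  rw [map_smul, real_inner_smul_left, real_inner_smul_right]
  field_simp

theorem exists_pos_mul_norm_sq_le_inner_of_isCompact [FiniteDimensional ℝ E]
    {K : Set (E →L[ℝ] E)} (hK : IsCompact K) (hpos : ∀ H ∈ K, ∀ ξ : E, ξ ≠ 0 → 0 < ⟪ξ, H ξ⟫) :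
    ∃ lam > 0, ∀ H ∈ K, ∀ ξ : E, lam * ‖ξ‖ ^ 2 ≤ ⟪ξ, H ξ⟫ := by
  have normalize_mem_sphere : ∀ ξ : E, ξ ≠ 0 → ‖ξ‖⁻¹ • ξ ∈ Metric.sphere (0 : E) 1 := fun ξ hξ ↦ by
    simp [norm_smul, norm_ne_zero_iff.mpr hξ]
  by_cases hne : (K ×ˢ Metric.sphere (0 : E) 1).Nonempty
  · have hcont : Continuous fun p : (E →L[ℝ] E) × E ↦ ⟪p.2, p.1 p.2⟫ :=
      continuous_snd.inner isBoundedBilinearMap_apply.continuous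
    obtain ⟨⟨H₀, u₀⟩, ⟨hH₀, hu₀⟩, hmin⟩ :=
      (hK.prod (isCompact_sphere 0 1)).exists_isMinOn hne hcont.continuousOn
    have hu₀ : u₀ ≠ 0 := ne_zero_of_mem_sphere one_ne_zero ⟨u₀, hu₀⟩
    refine ⟨⟪u₀, H₀ u₀⟫, hpos H₀ hH₀ u₀ hu₀, fun H hH ξ ↦ ?_⟩
    rcases eq_or_ne ξ 0 with rfl | hξ
    · simp
    rw [inner_apply_self_eq_norm_sq_mul_normalize H hξ, mul_comm]
    gcongr
    exact hmin (Set.mk_mem_prod hH (normalize_mem_sphere ξ hξ))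
  · refine ⟨1, one_pos, fun H hH ξ ↦ ?_⟩
    rcases eq_or_ne ξ 0 with rfl | hξ
    · simp
    exact absurd ⟨(H, _), hH, normalize_mem_sphere ξ hξ⟩ hne

theorem mul_norm_le_norm_apply_of_mul_norm_sq_le_inner {H : E →L[ℝ] E} {lam : ℝ}
    (hH : ∀ ξ : E, lam * ‖ξ‖ ^ 2 ≤ ⟪ξ, H ξ⟫) (ξ : E) : lam * ‖ξ‖ ≤ ‖H ξ‖ := by
  rcases eq_or_ne ξ 0 with rfl | hξ
  · simp
  have hξ' : 0 < ‖ξ‖ := norm_pos_iff.mpr hξ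
  have : lam * ‖ξ‖ * ‖ξ‖ ≤ ‖H ξ‖ * ‖ξ‖ := by
    linarith [hH ξ, real_inner_le_norm ξ (H ξ)]
  exact le_of_mul_le_mul_right this hξ'

end InnerProductSpace

section NormedSpace

variable {𝕜 E F : Type*} [NontriviallyNormedField 𝕜] [NormedAddCommGroup E] [NormedSpace 𝕜 E]
  [NormedAddCommGroup F] [NormedSpace 𝕜 F]

theorem sub_opNorm_mul_norm_le_norm_apply {H H' : E →L[𝕜] F} {a : ℝ}
    (hH' : ∀ ξ : E, a * ‖ξ‖ ≤ ‖H' ξ‖) (ξ : E) : (a - ‖H - H'‖) * ‖ξ‖ ≤ ‖H ξ‖ := by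
  have htri : ‖H' ξ‖ ≤ ‖H ξ‖ + ‖(H - H') ξ‖ := by
    have := norm_sub_le (H ξ) ((H - H') ξ)
    rwa [sub_apply, sub_sub_cancel] at this
  linarith [hH' ξ, (H - H').le_opNorm ξ]

theorem exists_inverse_of_mul_norm_le_norm_apply [CompleteSpace 𝕜] [FiniteDimensional 𝕜 E] {H : E →L[𝕜] E} {c : ℝ}
    (hc : 0 < c) (hH : ∀ ξ : E, c * ‖ξ‖ ≤ ‖H ξ‖) :
    ∃ Hinv : E →L[𝕜] E, (∀ v, Hinv (H v) = v ∧ H (Hinv v) = v) ∧ ∀ v, ‖Hinv v‖ ≤ c⁻¹ * ‖v‖ := by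
  have hinj : Function.Injective H := by
    refine (injective_iff_map_eq_zero H).mpr fun ξ hξ ↦ norm_le_zero_iff.mp ?_
    have := hH ξ
    rw [hξ, norm_zero] at this
    exact nonpos_of_mul_nonpos_right this hc
  let e : E ≃ₗ[𝕜] E := LinearEquiv.ofBijective (H : E →ₗ[𝕜] E)
    ⟨hinj, LinearMap.injective_iff_surjective.mp hinj⟩
  refine ⟨LinearMap.toContinuousLinearMap e.symm.toLinearMap,
    fun v ↦ ⟨e.symm_apply_apply v, e.apply_symm_apply v⟩, fun v ↦ ?_⟩
  rw [le_inv_mul_iff₀ hc]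
  have := hH (e.symm v)
  rwa [show H (e.symm v) = v from e.apply_symm_apply v] at this

end NormedSpace

theorem norm_newton_step_sub_le {E : Type*} [NormedAddCommGroup E] [NormedSpace ℝ E]
    {G : E → E} {xs x : E} (hG : G xs = 0) {H Hinv : E →L[ℝ] E} (hinv : ∀ v, Hinv (H v) = v)
    {C : ℝ} (hC : ∀ v, ‖Hinv v‖ ≤ C * ‖v‖) :
    ‖x - Hinv (G x) - xs‖ ≤ C * ‖G xs - G x - H (xs - x)‖ := by
  have : x - Hinv (G x) - xs = Hinv (G xs - G x - H (xs - x)) := by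
    rw [map_sub, map_sub, hinv, hG, map_zero]
    abel
  exact this ▸ hC _

theorem stmt_15_general
    {E : Type*} [NormedAddCommGroup E] [InnerProductSpace ℝ E] [FiniteDimensional ℝ E]
    (G : E → E) (DG : E → Set (E →L[ℝ] E)) (xs : E)
    (μ : ℝ)
    (hG0 : G xs = 0)
    (hcompact : IsCompact (DG xs))
    (hposdef : ∀ H ∈ DG xs, ∀ ξ : E, ξ ≠ 0 → 0 < ⟪ξ, H ξ⟫)
    (husc : ∀ ε > 0, ∃ δ > 0, ∀ x ∈ Metric.ball xs δ, ∀ H ∈ DG x,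
      ∃ H' ∈ DG xs, ‖H - H'‖ ≤ ε)
    (hss : ∀ ε > 0, ∃ δ > 0, ∀ y ∈ Metric.ball xs δ, ∀ H ∈ DG y,
      ‖G xs - G y - H (xs - y)‖ ≤ ε * ‖xs - y‖ ^ (1 + μ)) :
    ∃ c > 0, ∃ δ > 0, ∀ x ∈ Metric.ball xs δ, ∀ H ∈ DG x,
      ∃ Hinv : E →L[ℝ] E, (∀ v, Hinv (H v) = v ∧ H (Hinv v) = v) ∧
        ‖x - Hinv (G x) - xs‖ ≤ c * ‖x - xs‖ ^ (1 + μ) := by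
  obtain ⟨lam, hlam, hcoer⟩ := exists_pos_mul_norm_sq_le_inner_of_isCompact hcompact hposdef
  obtain ⟨δ₁, hδ₁, hnear⟩ := husc (lam / 2) (by positivity)
  obtain ⟨δ₂, hδ₂, hsemi⟩ := hss 1 one_pos
  refine ⟨2 / lam, by positivity, min δ₁ δ₂, lt_min hδ₁ hδ₂, fun x hx H hH ↦ ?_⟩
  obtain ⟨H', hH', hHH'⟩ := hnear x (Metric.ball_subset_ball (min_le_left _ _) hx) H hH
  have hbelow : ∀ ξ : E, lam / 2 * ‖ξ‖ ≤ ‖H ξ‖ := fun ξ ↦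
    le_trans (by gcongr; linarith)
      (sub_opNorm_mul_norm_le_norm_apply (mul_norm_le_norm_apply_of_mul_norm_sq_le_inner
        (hcoer H' hH')) ξ)
  obtain ⟨Hinv, hinv, hbound⟩ := exists_inverse_of_mul_norm_le_norm_apply (by positivity) hbelow
  refine ⟨Hinv, hinv, ?_⟩
  calc ‖x - Hinv (G x) - xs‖ ≤ 2 / lam * ‖G xs - G x - H (xs - x)‖ :=
        norm_newton_step_sub_le hG0 (fun v ↦ (hinv v).1) (by simpa only [inv_div] using hbound)
    _ ≤ 2 / lam * (1 * ‖xs - x‖ ^ (1 + μ)) := by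
        gcongr
        exact hsemi x (Metric.ball_subset_ball (min_le_right _ _) hx) H hH
    _ = 2 / lam * ‖x - xs‖ ^ (1 + μ) := by rw [one_mul, norm_sub_rev]

/-- Euclidean superlinear step estimate: for `φ : ℝⁿ → ℝ` (modeled by a
finite-dimensional real inner product space `E`) with `G = grad φ` semismooth of order
`μ` at `xs`, `G xs = 0`, and every element of the Clarke generalized Jacobian
`DG xs` positive definite, there exist `c, δ > 0` such that for all `x ∈ B_δ(xs)` and
`H ∈ DG x`, `‖x − H⁻¹ G x − xs‖ ≤ c ‖x − xs‖^(1+μ)`. -/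
theorem stmt_15
    {E : Type*} [NormedAddCommGroup E] [InnerProductSpace ℝ E] [FiniteDimensional ℝ E]
    (G : E → E) (DG : E → Set (E →L[ℝ] E)) (xs : E)
    (μ : ℝ) (hμ : 0 ≤ μ)
    (hG0 : G xs = 0)
    (hne : (DG xs).Nonempty)
    (hcompact : IsCompact (DG xs))
    (hsym : ∀ x : E, ∀ H ∈ DG x, ∀ u v : E, ⟪H u, v⟫ = ⟪u, H v⟫)
    (hposdef : ∀ H ∈ DG xs, ∀ ξ : E, ξ ≠ 0 → 0 < ⟪ξ, H ξ⟫)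
    (husc : ∀ ε > 0, ∃ δ > 0, ∀ x ∈ Metric.ball xs δ, ∀ H ∈ DG x,
      ∃ H' ∈ DG xs, ‖H - H'‖ ≤ ε)
    (hss : ∀ ε > 0, ∃ δ > 0, ∀ y ∈ Metric.ball xs δ, ∀ H ∈ DG y,
      ‖G xs - G y - H (xs - y)‖ ≤ ε * ‖xs - y‖ ^ (1 + μ)) :
    ∃ c > 0, ∃ δ > 0, ∀ x ∈ Metric.ball xs δ, ∀ H ∈ DG x,
      ∃ Hinv : E →L[ℝ] E, (∀ v, Hinv (H v) = v ∧ H (Hinv v) = v) ∧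
        ‖x - Hinv (G x) - xs‖ ≤ c * ‖x - xs‖ ^ (1 + μ) :=
  stmt_15_general G DG xs μ hG0 hcompact hposdef husc hss
end

section
/- If the trust-region decrease ratio satisfies |ρ_k − 1| ≤ C‖η_k‖^{1+ν} / min{Δ_k, ε/β} whenever ‖grad φ(x_k)‖ ≥ ε and ‖η_k‖ ≤ Δ_k ≤ Δ̄, then there exists Δ̃ > 0 (namely Δ̃ = min{ε/β, (2C)^{-1/ν}}) such that Δ_k ≤ Δ̃ implies ρ_k ≥ 1/2, and consequently under the standard radius update rule (Δ_{k+1} = Δ_k/4 if ρ_k < 1/4, Δ_{k+1} ≥ Δ_k otherwise) the trust-region radii are bounded below by min{Δ_K, Δ̃/4} for all k ≥ K. -/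
/-!
On the radii `Δ k ≤ Δt`, the bound `‖η k‖ ≤ Δ k` turns the hypothesis into
`|ρ k - 1| ≤ C Δ k ^ ν ≤ C (2C)⁻¹ = 1/2`, so such a step is successful and the radius is
not shrunk. Hence a shrinking step starts from a radius above `Δt` and ends above `Δt / 4`.
-/

open Real

lemma rpow_le_inv_of_le_rpow_neg_inv {x a ν : ℝ} (hx : 0 ≤ x) (ha : 0 < a) (hν : 0 < ν)
    (hxa : x ≤ a ^ (-(1 / ν))) : x ^ ν ≤ a⁻¹ := by
  calc x ^ ν ≤ (a ^ (-(1 / ν))) ^ ν := rpow_le_rpow hx hxa hν.le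
    _ = a⁻¹ := by
      rw [← rpow_mul ha.le, neg_mul, one_div, inv_mul_cancel₀ hν.ne', rpow_neg_one]

lemma mul_rpow_one_add_div_le {C η Δ ν : ℝ} (hC : 0 ≤ C) (hν : 0 ≤ ν) (hη : 0 ≤ η)
    (hηΔ : η ≤ Δ) (hΔ : 0 < Δ) : C * η ^ (1 + ν) / Δ ≤ C * Δ ^ ν := by
  rw [div_le_iff₀ hΔ]
  calc C * η ^ (1 + ν) ≤ C * Δ ^ (1 + ν) := by gcongr
    _ = C * Δ ^ ν * Δ := by rw [rpow_add hΔ, rpow_one]; ring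

lemma half_le_of_abs_sub_one_le_of_le_rpow {ρ C η Δ ε β ν : ℝ} (hC : 0 < C) (hν : 0 < ν)
    (hη : 0 ≤ η) (hηΔ : η ≤ Δ) (hΔ : 0 < Δ)
    (hρ : |ρ - 1| ≤ C * η ^ (1 + ν) / min Δ (ε / β))
    (hsmall : Δ ≤ min (ε / β) ((2 * C) ^ (-(1 / ν)))) : 1 / 2 ≤ ρ := by
  rw [min_eq_left (hsmall.trans (min_le_left _ _))] at hρ
  have hpow : Δ ^ ν ≤ (2 * C)⁻¹ :=
    rpow_le_inv_of_le_rpow_neg_inv hΔ.le (by positivity) hν (hsmall.trans (min_le_right _ _))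
  have hCpow : C * Δ ^ ν ≤ 1 / 2 :=
    calc C * Δ ^ ν ≤ C * (2 * C)⁻¹ := by gcongr
      _ = 1 / 2 := by field_simp
  have := (abs_le.mp (hρ.trans ((mul_rpow_one_add_div_le hC.le hν.le hη hηΔ hΔ).trans hCpow))).1
  linarith

lemma min_le_of_le_succ_or_le {Δ : ℕ → ℝ} {m : ℝ} {K : ℕ}
    (hstep : ∀ n ≥ K, Δ n ≤ Δ (n + 1) ∨ m ≤ Δ (n + 1)) :
    ∀ k ≥ K, min (Δ K) m ≤ Δ k := by
  intro k hk
  induction k, hk using Nat.le_induction with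
  | base => exact min_le_left _ _
  | succ n hn ih =>
    rcases hstep n hn with hmono | hbound
    · exact ih.trans hmono
    · exact (min_le_right _ _).trans hbound

theorem stmt_16_general
    (C ε β ν Δbar : ℝ) (hC : 0 < C) (hε : 0 < ε) (hβ : 0 < β) (hν : 0 < ν)
    (ρ Δ gk ηn : ℕ → ℝ)
    (hΔpos : ∀ k, 0 < Δ k ∧ Δ k ≤ Δbar)
    (hηΔ : ∀ k, 0 ≤ ηn k ∧ ηn k ≤ Δ k)
    (hratio : ∀ k, ε ≤ gk k →
      |ρ k - 1| ≤ C * ηn k ^ (1 + ν) / min (Δ k) (ε / β))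
    (hupdate : ∀ k, (ρ k < 1/4 → Δ (k+1) = Δ k / 4) ∧ (¬ ρ k < 1/4 → Δ k ≤ Δ (k+1))) :
    ∃ Δt > 0, Δt = min (ε / β) ((2 * C) ^ (-(1/ν))) ∧
      (∀ k, ε ≤ gk k → Δ k ≤ Δt → (1:ℝ)/2 ≤ ρ k) ∧
      (∀ K : ℕ, (∀ k ≥ K, ε ≤ gk k) → ∀ k ≥ K, min (Δ K) (Δt / 4) ≤ Δ k) := by
  set Δt : ℝ := min (ε / β) ((2 * C) ^ (-(1/ν)))
  have hsuccess : ∀ k, ε ≤ gk k → Δ k ≤ Δt → (1:ℝ)/2 ≤ ρ k := fun k hg hle =>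
    half_le_of_abs_sub_one_le_of_le_rpow hC hν (hηΔ k).1 (hηΔ k).2 (hΔpos k).1 (hratio k hg) hle
  refine ⟨Δt, lt_min (by positivity) (by positivity), rfl, hsuccess, fun K hgK => ?_⟩
  refine min_le_of_le_succ_or_le fun n hn => ?_
  by_cases hρ : ρ n < 1/4
  · have hlarge : Δt < Δ n := lt_of_not_ge fun hle => by linarith [hsuccess n (hgK n hn) hle]
    right
    rw [(hupdate n).1 hρ]
    linarith
  · exact Or.inl ((hupdate n).2 hρ)

/-- lower bound on the trust-region radii.  If
`|ρ k − 1| ≤ C ‖η k‖^(1+ν) / min{Δ k, ε/β}` whenever `‖grad φ(x k)‖ ≥ ε` (here `gk k`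
denotes `‖grad φ(x k)‖` and `ηn k` denotes `‖η k‖ ≤ Δ k ≤ Δbar`), then with
`Δt = min{ε/β, (2C)^(-1/ν)}` one has: `Δ k ≤ Δt` implies `ρ k ≥ 1/2`, and under the
standard radius update rule the radii satisfy `Δ k ≥ min{Δ K, Δt/4}` for `k ≥ K`
provided the gradient norms stay `≥ ε` from `K` on. -/
theorem stmt_16
    (C ε β ν Δbar : ℝ) (hC : 0 < C) (hε : 0 < ε) (hβ : 0 < β) (hν : 0 < ν)
    (hΔbar : 0 < Δbar)
    (ρ Δ gk ηn : ℕ → ℝ)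
    (hΔpos : ∀ k, 0 < Δ k ∧ Δ k ≤ Δbar)
    (hηΔ : ∀ k, 0 ≤ ηn k ∧ ηn k ≤ Δ k)
    (hratio : ∀ k, ε ≤ gk k →
      |ρ k - 1| ≤ C * ηn k ^ (1 + ν) / min (Δ k) (ε / β))
    (hupdate : ∀ k, (ρ k < 1/4 → Δ (k+1) = Δ k / 4) ∧ (¬ ρ k < 1/4 → Δ k ≤ Δ (k+1))) :
    ∃ Δt > 0, Δt = min (ε / β) ((2 * C) ^ (-(1/ν))) ∧
      (∀ k, ε ≤ gk k → Δ k ≤ Δt → (1:ℝ)/2 ≤ ρ k) ∧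
      (∀ K : ℕ, (∀ k ≥ K, ε ≤ gk k) → ∀ k ≥ K, min (Δ K) (Δt / 4) ≤ Δ k) :=
  stmt_16_general C ε β ν Δbar hC hε hβ hν ρ Δ gk ηn hΔpos hηΔ hratio hupdate
end

section
/- Let f : ℝⁿ → ℝ be differentiable with locally Lipschitz gradient, and suppose grad f is strongly semismooth at x* (i.e., there exist C, δ > 0 with ‖grad f(x*) − grad f(y) − H_y(x* − y)‖ ≤ C‖x* − y‖² for all y ∈ B_δ(x*) and H_y in the Clarke generalized Jacobian of grad f at y). If moreover grad f(x*) = 0 and x_k → x* with Newton iterates x_{k+1} = x_k − H_k⁻¹ grad f(x_k) for H_k ∈ ∂(grad f)(x_k) with ‖H_k⁻¹‖ ≤ β uniformly, then ‖x_{k+1} − x*‖ ≤ βC ‖x_k − x*‖² for all large k. -/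
section NewtonStep

variable {𝕜 E F : Type*} [NontriviallyNormedField 𝕜]
  [NormedAddCommGroup E] [NormedSpace 𝕜 E] [NormedAddCommGroup F] [NormedSpace 𝕜 F]

theorem newton_step_sub_eq {G : E → F} {H : E →L[𝕜] F} {Hinv : F →L[𝕜] E}
    (hleft : ∀ v, Hinv (H v) = v) {xs : E} (hG0 : G xs = 0) (y : E) :
    y - Hinv (G y) - xs = Hinv (G xs - G y - H (xs - y)) := by
  rw [hG0, map_sub, map_sub, hleft, map_zero]
  abel

theorem norm_newton_step_sub_le_s17 {G : E → F} {H : E →L[𝕜] F} {Hinv : F →L[𝕜] E}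
    (hleft : ∀ v, Hinv (H v) = v) {xs : E} (hG0 : G xs = 0) {y : E} {β C : ℝ}
    (hβ : ‖Hinv‖ ≤ β) (hres : ‖G xs - G y - H (xs - y)‖ ≤ C * ‖xs - y‖ ^ 2) :
    ‖y - Hinv (G y) - xs‖ ≤ β * C * ‖y - xs‖ ^ 2 :=
  calc ‖y - Hinv (G y) - xs‖
      = ‖Hinv (G xs - G y - H (xs - y))‖ := by rw [newton_step_sub_eq hleft hG0]
    _ ≤ ‖Hinv‖ * ‖G xs - G y - H (xs - y)‖ := Hinv.le_opNorm _
    _ ≤ β * (C * ‖xs - y‖ ^ 2) := mul_le_mul hβ hres (norm_nonneg _) ((norm_nonneg _).trans hβ)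
    _ = β * C * ‖y - xs‖ ^ 2 := by rw [norm_sub_rev, mul_assoc]

end NewtonStep

theorem stmt_17_general
    {E : Type*} [NormedAddCommGroup E] [InnerProductSpace ℝ E]
    (G : E → E) (DG : E → Set (E →L[ℝ] E)) (xs : E)
    (C δ : ℝ) (hδ : 0 < δ)
    (hss : ∀ y ∈ Metric.ball xs δ, ∀ H ∈ DG y,
      ‖G xs - G y - H (xs - y)‖ ≤ C * ‖xs - y‖ ^ 2)
    (hG0 : G xs = 0)
    (x : ℕ → E) (Hk Hinv : ℕ → (E →L[ℝ] E))
    (hconv : Filter.Tendsto x Filter.atTop (nhds xs))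
    (hH : ∀ k, Hk k ∈ DG (x k))
    (hHinv : ∀ k, ∀ v : E, Hinv k (Hk k v) = v ∧ Hk k (Hinv k v) = v)
    (β : ℝ) (hβbound : ∀ k, ‖Hinv k‖ ≤ β)
    (hnewton : ∀ k, x (k+1) = x k - Hinv k (G (x k))) :
    ∃ K : ℕ, ∀ k ≥ K, ‖x (k+1) - xs‖ ≤ β * C * ‖x k - xs‖ ^ 2 := by
  obtain ⟨K, hK⟩ := Filter.eventually_atTop.1 (hconv (Metric.ball_mem_nhds xs hδ))
  refine ⟨K, fun k hk => ?_⟩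
  rw [hnewton k]
  exact norm_newton_step_sub_le_s17 (fun v => (hHinv k v).1) hG0 (hβbound k)
    (hss (x k) (hK k hk) (Hk k) (hH k))

/-- quadratic convergence of the semismooth Newton method in `ℝⁿ`
(modeled by a finite-dimensional real inner product space `E`).  If `G = grad f` is
strongly semismooth at `xs` (constants `C, δ`), `G xs = 0`, `x k → xs`, the Newton
iterates satisfy `x (k+1) = x k − H_k⁻¹ G (x k)` with `H_k ∈ ∂G(x k)` and
`‖H_k⁻¹‖ ≤ β` uniformly, then `‖x (k+1) − xs‖ ≤ β C ‖x k − xs‖²` for all large `k`. -/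
theorem stmt_17
    {E : Type*} [NormedAddCommGroup E] [InnerProductSpace ℝ E] [FiniteDimensional ℝ E]
    (G : E → E) (DG : E → Set (E →L[ℝ] E)) (xs : E)
    (C δ : ℝ) (hC : 0 < C) (hδ : 0 < δ)
    (hss : ∀ y ∈ Metric.ball xs δ, ∀ H ∈ DG y,
      ‖G xs - G y - H (xs - y)‖ ≤ C * ‖xs - y‖ ^ 2)
    (hG0 : G xs = 0)
    (x : ℕ → E) (Hk Hinv : ℕ → (E →L[ℝ] E))
    (hconv : Filter.Tendsto x Filter.atTop (nhds xs))
    (hH : ∀ k, Hk k ∈ DG (x k))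
    (hHinv : ∀ k, ∀ v : E, Hinv k (Hk k v) = v ∧ Hk k (Hinv k v) = v)
    (β : ℝ) (hβ : 0 < β) (hβbound : ∀ k, ‖Hinv k‖ ≤ β)
    (hnewton : ∀ k, x (k+1) = x k - Hinv k (G (x k))) :
    ∃ K : ℕ, ∀ k ≥ K, ‖x (k+1) - xs‖ ≤ β * C * ‖x k - xs‖ ^ 2 :=
  stmt_17_general G DG xs C δ hδ hss hG0 x Hk Hinv hconv hH hHinv β hβbound hnewton
end
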